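/- arXiv:1005.1035 — 2 statements merged into one kernel-verified Lean document; each statement's English description precedes it below -/
import Mathlib

section
/- Suppose (ξ_n) is a sequence of finite nonnegative Borel measures on ℝ₊, W ≥ 0, and x* ∈ (0,∞), such that for every ε ∈ (0, x*): ξ_n([0, x*−ε]) → 0, ∫_{(x*+ε,∞)} y dξ_n(y) → 0, and ∫_{(x*−ε, x*+ε]} y dξ_n(y) → W. Then ξ_n converges weakly to (W/x*)·δ_{x*}. -/
/-!
Outside every neighbourhood of x* the mass of ξ_n tends to zero: below x* by hypothesis, above
x* by Markov's inequality for the first moment. For measures of bounded total mass concentrating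
at a point x, `∫ g dξ_n - ξ_n(ℝ) g(x) → 0` for every bounded measurable g continuous at x.
Applied to `g y = y · 1_{(x*-ε, x*+ε]}(y)`, whose integrals tend to W, this gives
`ξ_n(ℝ) → W / x*`, and applied to an arbitrary bounded continuous g it gives the theorem.
-/

open MeasureTheory Set Filter Topology

section Concentration

variable {ι α : Type*} [TopologicalSpace α] [MeasurableSpace α] [OpensMeasurableSpace α]
  {l : Filter ι} {μ : ι → Measure α} [∀ i, IsFiniteMeasure (μ i)] {x : α}

theorem tendsto_integral_zero_of_tendsto_measureReal_compl
    (hconc : ∀ U ∈ 𝓝 x, Tendsto (fun i => (μ i).real Uᶜ) l (𝓝 0))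
    (hmass : IsBoundedUnder (· ≤ ·) l fun i => (μ i).real univ)
    {h : α → ℝ} (hm : Measurable h) (hx : Tendsto h (𝓝 x) (𝓝 0)) {C : ℝ} (hC : ∀ y, |h y| ≤ C) :
    Tendsto (fun i => ∫ y, h y ∂μ i) l (𝓝 0) := by
  obtain ⟨M, hM0, hM⟩ : ∃ M > 0, ∀ᶠ i in l, (μ i).real univ ≤ M := by
    obtain ⟨M, hM⟩ := hmass
    exact ⟨max M 1, by positivity, (eventually_map.1 hM).mono fun i hi => hi.trans (le_max_left _ _)⟩
  rw [Metric.tendsto_nhds]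
  intro δ hδ
  obtain ⟨U, hUh, hUo, hxU⟩ :=
    mem_nhds_iff.mp (hx (Metric.ball_mem_nhds 0 (by positivity : 0 < δ / (2 * M))))
  have hnear : ∀ y ∈ U, ‖h y‖ ≤ δ / (2 * M) := fun y hy => by
    simpa using (mem_ball_zero_iff.mp (hUh hy)).le
  have htail : ∀ᶠ i in l, C * (μ i).real Uᶜ < δ / 2 := by
    have := (hconc U (hUo.mem_nhds hxU)).const_mul C
    rw [mul_zero] at this
    exact this.eventually (gt_mem_nhds (half_pos hδ))
  filter_upwards [hM, htail] with i hMi hUi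
  have hint : Integrable h (μ i) :=
    .of_bound hm.aestronglyMeasurable C (ae_of_all _ fun y => (Real.norm_eq_abs _).trans_le (hC y))
  have hU : ‖∫ y in U, h y ∂μ i‖ ≤ δ / 2 := calc
    _ ≤ δ / (2 * M) * (μ i).real U := norm_setIntegral_le_of_norm_le_const (measure_lt_top _ _) hnear
    _ ≤ δ / (2 * M) * M := by gcongr; exact (measureReal_mono (subset_univ U)).trans hMi
    _ = δ / 2 := by field_simp
  have hUc : ‖∫ y in Uᶜ, h y ∂μ i‖ ≤ C * (μ i).real Uᶜ :=
    norm_setIntegral_le_of_norm_le_const (measure_lt_top _ _) fun y _ =>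
      (Real.norm_eq_abs _).trans_le (hC y)
  rw [dist_zero_right, ← integral_add_compl hUo.measurableSet hint]
  linarith [norm_add_le (∫ y in U, h y ∂μ i) (∫ y in Uᶜ, h y ∂μ i)]

theorem tendsto_integral_sub_measureReal_univ_mul
    (hconc : ∀ U ∈ 𝓝 x, Tendsto (fun i => (μ i).real Uᶜ) l (𝓝 0))
    (hmass : IsBoundedUnder (· ≤ ·) l fun i => (μ i).real univ)
    {g : α → ℝ} (hm : Measurable g) (hgx : ContinuousAt g x) {C : ℝ} (hC : ∀ y, |g y| ≤ C) :
    Tendsto (fun i => ∫ y, g y ∂μ i - (μ i).real univ * g x) l (𝓝 0) := by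
  have hint : ∀ i, Integrable g (μ i) := fun i =>
    .of_bound hm.aestronglyMeasurable C (ae_of_all _ fun y => (Real.norm_eq_abs _).trans_le (hC y))
  have hbound : ∀ y, |g y - g x| ≤ C + C := fun y =>
    (abs_sub _ _).trans (add_le_add (hC y) (hC x))
  have := tendsto_integral_zero_of_tendsto_measureReal_compl hconc hmass (hm.sub_const (g x))
    (by simpa using hgx.sub_const (g x)) hbound
  refine this.congr fun i => ?_
  rw [integral_sub (hint i) (integrable_const _), integral_const, smul_eq_mul]

end Concentration

section RealLine

variable {ι : Type*} {l : Filter ι} {μ : ι → Measure ℝ} [∀ i, IsFiniteMeasure (μ i)]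

theorem measureReal_Iic_le_measureReal_Icc {ν : Measure ℝ} [IsFiniteMeasure ν]
    (hneg : ν (Iio 0) = 0) (a : ℝ) : ν.real (Iic a) ≤ ν.real (Icc 0 a) := calc
  ν.real (Iic a) ≤ ν.real (Iio 0 ∪ Icc 0 a) := measureReal_mono fun y hy => by
    rcases lt_or_ge y 0 with h | h
    exacts [Or.inl h, Or.inr ⟨h, hy⟩]
  _ ≤ ν.real (Iio 0) + ν.real (Icc 0 a) := measureReal_union_le _ _
  _ = ν.real (Icc 0 a) := by rw [measureReal_def, hneg, ENNReal.toReal_zero, zero_add]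

theorem tendsto_measureReal_Ioi_of_tendsto_setIntegral {b : ℝ} (hb : 0 < b)
    (hint : ∀ i, IntegrableOn (fun y => y) (Ioi b) (μ i))
    (h : Tendsto (fun i => ∫ y in Ioi b, y ∂μ i) l (𝓝 0)) :
    Tendsto (fun i => (μ i).real (Ioi b)) l (𝓝 0) := by
  refine squeeze_zero (fun _ => measureReal_nonneg) (fun i => ?_) (by simpa using h.div_const b)
  exact (le_div_iff₀' hb).mpr <| setIntegral_ge_of_const_le_real measurableSet_Ioi
    (measure_ne_top _ _) (fun y hy => le_of_lt hy) (hint i)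

theorem tendsto_measureReal_compl_of_tendsto_Iic_Ioi {x : ℝ} (hx : 0 < x)
    (hlow : ∀ ε, 0 < ε → ε < x → Tendsto (fun i => (μ i).real (Iic (x - ε))) l (𝓝 0))
    (hhigh : ∀ ε, 0 < ε → ε < x → Tendsto (fun i => (μ i).real (Ioi (x + ε))) l (𝓝 0)) :
    ∀ U ∈ 𝓝 x, Tendsto (fun i => (μ i).real Uᶜ) l (𝓝 0) := by
  intro U hU
  obtain ⟨r, hr, hball⟩ := Metric.mem_nhds_iff.mp hU
  set ε := min (r / 2) (x / 2)
  have hε : 0 < ε := by positivity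
  have hεx : ε < x := (min_le_right _ _).trans_lt (half_lt_self hx)
  have hεr : ε < r := (min_le_left _ _).trans_lt (half_lt_self hr)
  have hsub : Uᶜ ⊆ Iic (x - ε) ∪ Ioi (x + ε) := by
    intro y hy
    have hfar : r ≤ |y - x| := not_lt.mp fun h => hy (hball (by rwa [Metric.mem_ball, Real.dist_eq]))
    rcases le_abs'.mp hfar with h | h
    · exact Or.inl (show y ≤ x - ε by linarith)
    · exact Or.inr (show x + ε < y by linarith)
  refine squeeze_zero (fun _ => measureReal_nonneg)
    (fun i => (measureReal_mono hsub).trans (measureReal_union_le _ _)) ?_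
  simpa using (hlow ε hε hεx).add (hhigh ε hε hεx)

theorem tendsto_measureReal_univ_of_tendsto_setIntegral_Ioc {x ε W : ℝ} (hε : 0 < ε)
    (hεx : ε < x) (hconc : ∀ U ∈ 𝓝 x, Tendsto (fun i => (μ i).real Uᶜ) l (𝓝 0))
    (hmid : Tendsto (fun i => ∫ y in Ioc (x - ε) (x + ε), y ∂μ i) l (𝓝 W)) :
    Tendsto (fun i => (μ i).real univ) l (𝓝 (W / x)) := by
  set V := Ioc (x - ε) (x + ε)
  have hx : 0 < x := hε.trans hεx
  have hxV : x ∈ V := ⟨by linarith, by linarith⟩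
  have hV : V ∈ 𝓝 x := Ioc_mem_nhds (by linarith) (by linarith)
  have hmassV : ∀ i, (x - ε) * (μ i).real V ≤ ∫ y in V, y ∂μ i := fun i =>
    setIntegral_ge_of_const_le_real measurableSet_Ioc (measure_ne_top _ _) (fun y hy => hy.1.le)
      (continuous_id.integrableOn_Icc.mono_set Ioc_subset_Icc_self)
  have hmass : IsBoundedUnder (· ≤ ·) l fun i => (μ i).real univ := by
    refine ((hmid.div_const (x - ε)).add (hconc V hV)).isBoundedUnder_le.mono_le
      (Eventually.of_forall fun i => ?_)
    dsimp only
    rw [← measureReal_add_measureReal_compl measurableSet_Ioc]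
    gcongr
    exact (le_div_iff₀' (by linarith)).mpr (hmassV i)
  have hind : ∀ y, |V.indicator id y| ≤ x + ε := fun y => by
    by_cases hy : y ∈ V
    · rw [indicator_of_mem hy, id, abs_le]; constructor <;> linarith [hy.1, hy.2]
    · rw [indicator_of_notMem hy, abs_zero]; linarith
  have key : Tendsto (fun i => ∫ y in V, y ∂μ i - (μ i).real univ * x) l (𝓝 0) := by
    have := tendsto_integral_sub_measureReal_univ_mul hconc hmass
      (measurable_id.indicator measurableSet_Ioc)
      (continuousAt_id.congr (eventually_of_mem hV fun y hy => (indicator_of_mem hy id).symm)) hind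
    rw [indicator_of_mem hxV] at this
    simpa only [integral_indicator measurableSet_Ioc, id] using this
  have : Tendsto (fun i => (μ i).real univ * x) l (𝓝 W) := by
    simpa using hmid.sub key
  simpa [hx.ne'] using this.div_const x

end RealLine

theorem stmt_3_general (ξ : ℕ → Measure ℝ) [∀ n, IsFiniteMeasure (ξ n)]
    (hneg : ∀ n, ξ n (Set.Iio 0) = 0) (hint : ∀ n, Integrable (fun y => y) (ξ n))
    (W : ℝ) (xstar : ℝ) (hxstar : 0 < xstar)
    (hbelow : ∀ ε : ℝ, 0 < ε → ε < xstar →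
      Tendsto (fun n => (ξ n (Set.Icc 0 (xstar - ε))).toReal) atTop (nhds 0))
    (htail : ∀ ε : ℝ, 0 < ε → ε < xstar →
      Tendsto (fun n => ∫ y in Set.Ioi (xstar + ε), y ∂(ξ n)) atTop (nhds 0))
    (hmid : ∀ ε : ℝ, 0 < ε → ε < xstar →
      Tendsto (fun n => ∫ y in Set.Ioc (xstar - ε) (xstar + ε), y ∂(ξ n)) atTop (nhds W)) :
    ∀ g : ℝ → ℝ, Continuous g → (∃ C : ℝ, ∀ y : ℝ, |g y| ≤ C) →
      Tendsto (fun n => ∫ y, g y ∂(ξ n)) atTop (nhds ((W / xstar) * g xstar)) := by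
  rintro g hg ⟨C, hC⟩
  have hconc : ∀ U ∈ 𝓝 xstar, Tendsto (fun n => (ξ n).real Uᶜ) atTop (𝓝 0) :=
    tendsto_measureReal_compl_of_tendsto_Iic_Ioi hxstar
      (fun ε hε hεx => squeeze_zero (fun _ => measureReal_nonneg)
        (fun n => measureReal_Iic_le_measureReal_Icc (hneg n) _) (hbelow ε hε hεx))
      (fun ε hε hεx => tendsto_measureReal_Ioi_of_tendsto_setIntegral (by linarith)
        (fun n => (hint n).integrableOn) (htail ε hε hεx))
  have hmass : Tendsto (fun n => (ξ n).real univ) atTop (𝓝 (W / xstar)) :=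
    tendsto_measureReal_univ_of_tendsto_setIntegral_Ioc (half_pos hxstar) (half_lt_self hxstar)
      hconc (hmid _ (half_pos hxstar) (half_lt_self hxstar))
  have hsplit := tendsto_integral_sub_measureReal_univ_mul hconc hmass.isBoundedUnder_le
    hg.measurable hg.continuousAt hC
  simpa using hsplit.add (hmass.mul_const (g xstar))

/-- If ξ_n are finite measures on ℝ₊ with finite first moments, W ≥ 0, x* ∈ (0,∞), and for
every ε ∈ (0,x*): ξ_n([0,x*−ε]) → 0, ∫_{(x*+ε,∞)} y dξ_n → 0, and
∫_{(x*−ε,x*+ε]} y dξ_n → W, then ξ_n converges weakly to (W/x*)·δ_{x*}, i.e.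
∫ g dξ_n → (W/x*)·g(x*) for every bounded continuous g. -/
theorem stmt_3 (ξ : ℕ → Measure ℝ) [∀ n, IsFiniteMeasure (ξ n)]
    (hneg : ∀ n, ξ n (Set.Iio 0) = 0) (hint : ∀ n, Integrable (fun y => y) (ξ n))
    (W : ℝ) (hW : 0 ≤ W) (xstar : ℝ) (hxstar : 0 < xstar)
    (hbelow : ∀ ε : ℝ, 0 < ε → ε < xstar →
      Tendsto (fun n => (ξ n (Set.Icc 0 (xstar - ε))).toReal) atTop (nhds 0))
    (htail : ∀ ε : ℝ, 0 < ε → ε < xstar →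
      Tendsto (fun n => ∫ y in Set.Ioi (xstar + ε), y ∂(ξ n)) atTop (nhds 0))
    (hmid : ∀ ε : ℝ, 0 < ε → ε < xstar →
      Tendsto (fun n => ∫ y in Set.Ioc (xstar - ε) (xstar + ε), y ∂(ξ n)) atTop (nhds W)) :
    ∀ g : ℝ → ℝ, Continuous g → (∃ C : ℝ, ∀ y : ℝ, |g y| ≤ C) →
      Tendsto (fun n => ∫ y, g y ∂(ξ n)) atTop (nhds ((W / xstar) * g xstar)) :=
  stmt_3_general ξ hneg hint W xstar hxstar hbelow htail hmid
end

section
/- Let (ξ_n) be finite nonnegative Borel measures on ℝ₊ with finite first moments and x* ∈ (0,∞). Suppose for every ν-continuity-type ε ∈ (0,x*): ξ_n([0, x*−ε]) → 0 and ∫_{(x*+ε,∞)} y dξ_n(y) → 0, and that the total first moments ∫ y dξ_n(y) → W for some W ≥ 0. Then the total masses converge: ξ_n(ℝ₊) → W/x*. -/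
open MeasureTheory Set Filter Topology

/-!
For `0 < ε < x*` and `y > 0` one has the pointwise bound
`|x* - y| ≤ x* · 1[0, x*-ε](y) + ε/(x*-ε) · y + y · 1(x*+ε, ∞)(y)`.
Integrating it against `ξ_n` bounds `|x* ξ_n(ℝ₊) - ∫ y dξ_n|` by quantities whose limit is
`ε W/(x*-ε)`; letting `ε → 0` gives `x* ξ_n(ℝ₊) - ∫ y dξ_n → 0`, and the moments tend to `W`.
-/

lemma abs_sub_le_indicator_add_mul_add_indicator {x ε y : ℝ} (hε : 0 < ε) (hεx : ε < x)
    (hy : 0 < y) :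
    |x - y| ≤ (Icc 0 (x - ε)).indicator (fun _ => x) y + ε / (x - ε) * y
      + (Ioi (x + ε)).indicator (fun y => y) y := by
  have hb : 0 < x - ε := by linarith
  have h₁ : 0 ≤ (Icc 0 (x - ε)).indicator (fun _ => x) y :=
    indicator_nonneg (fun _ _ => by linarith) y
  have h₂ : 0 ≤ ε / (x - ε) * y := by positivity
  have h₃ : 0 ≤ (Ioi (x + ε)).indicator (fun y => y) y :=
    indicator_nonneg (fun z hz => by simp only [mem_Ioi] at hz; linarith) y
  rcases le_or_gt y (x - ε) with hyb | hyb
  · rw [indicator_of_mem (show y ∈ Icc 0 (x - ε) from ⟨hy.le, hyb⟩), abs_of_nonneg (by linarith)]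
    linarith
  rcases le_or_gt y (x + ε) with hyc | hyc
  · have hε_le : ε ≤ ε / (x - ε) * y := by
      rw [div_mul_eq_mul_div, le_div_iff₀ hb]; nlinarith
    have : |x - y| ≤ ε := abs_sub_le_iff.2 ⟨by linarith, by linarith⟩
    linarith
  · rw [indicator_of_mem (show y ∈ Ioi (x + ε) from hyc), abs_of_neg (by linarith)]
    linarith

lemma abs_mul_measureReal_univ_sub_integral_le {μ : Measure ℝ} [IsFiniteMeasure μ]
    (hμ : μ (Iic 0) = 0) (hint : Integrable (fun y => y) μ) {x ε : ℝ} (hε : 0 < ε)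
    (hεx : ε < x) :
    |x * μ.real univ - ∫ y, y ∂μ| ≤ x * μ.real (Icc 0 (x - ε)) + ε / (x - ε) * ∫ y, y ∂μ
      + ∫ y in Ioi (x + ε), y ∂μ := by
  have hpos : ∀ᵐ y ∂μ, 0 < y := by
    rw [ae_iff]
    simp only [not_lt]
    exact hμ
  have hbound_int : Integrable (fun y => (Icc 0 (x - ε)).indicator (fun _ => x) y
      + ε / (x - ε) * y + (Ioi (x + ε)).indicator (fun y => y) y) μ :=
    (((integrable_const x).indicator measurableSet_Icc).add (hint.const_mul _)).add
      (hint.indicator measurableSet_Ioi)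
  calc |x * μ.real univ - ∫ y, y ∂μ| = |∫ y, (x - y) ∂μ| := by
        rw [integral_sub (integrable_const x) hint, integral_const, smul_eq_mul, mul_comm]
    _ ≤ ∫ y, |x - y| ∂μ := abs_integral_le_integral_abs
    _ ≤ ∫ y, ((Icc 0 (x - ε)).indicator (fun _ => x) y + ε / (x - ε) * y
          + (Ioi (x + ε)).indicator (fun y => y) y) ∂μ :=
        integral_mono_ae ((integrable_const x).sub hint).abs hbound_int
          (hpos.mono fun y hy => abs_sub_le_indicator_add_mul_add_indicator hε hεx hy)
    _ = _ := by
        rw [integral_add (f := fun y => (Icc 0 (x - ε)).indicator (fun _ => x) y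
            + ε / (x - ε) * y) (((integrable_const x).indicator measurableSet_Icc).add
            (hint.const_mul _)) (hint.indicator measurableSet_Ioi),
          integral_add ((integrable_const x).indicator measurableSet_Icc) (hint.const_mul _),
          integral_indicator measurableSet_Icc, integral_indicator measurableSet_Ioi,
          setIntegral_const, integral_const_mul, smul_eq_mul, mul_comm x]

lemma tendsto_zero_of_abs_le_of_tendsto {ι : Type*} {l : Filter ι} [l.NeBot] {e : ℕ → ℝ}
    {w : ι → ℕ → ℝ} {L : ι → ℝ} (hL : Tendsto L l (𝓝 0))
    (hw : ∀ᶠ i in l, Tendsto (w i) atTop (𝓝 (L i))) (hle : ∀ᶠ i in l, ∀ n, |e n| ≤ w i n) :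
    Tendsto e atTop (𝓝 0) := by
  rw [Metric.tendsto_nhds]
  intro η hη
  obtain ⟨i, hLi, hwi, hlei⟩ := ((hL.eventually (gt_mem_nhds hη)).and (hw.and hle)).exists
  filter_upwards [hwi.eventually (gt_mem_nhds hLi)] with n hn
  rw [Real.dist_0_eq_abs]
  exact (hlei n).trans_lt hn

theorem stmt_17_general (ξ : ℕ → Measure ℝ) [∀ n, IsFiniteMeasure (ξ n)]
    (hsupp : ∀ n, ξ n (Set.Iic 0) = 0) (hint : ∀ n, Integrable (fun y => y) (ξ n))
    (xstar : ℝ) (hxstar : 0 < xstar) (W : ℝ)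
    (hbelow : ∀ ε : ℝ, 0 < ε → ε < xstar →
      Tendsto (fun n => (ξ n (Set.Icc 0 (xstar - ε))).toReal) atTop (nhds 0))
    (htail : ∀ ε : ℝ, 0 < ε → ε < xstar →
      Tendsto (fun n => ∫ y in Set.Ioi (xstar + ε), y ∂(ξ n)) atTop (nhds 0))
    (hmom : Tendsto (fun n => ∫ y, y ∂(ξ n)) atTop (nhds W)) :
    Tendsto (fun n => (ξ n Set.univ).toReal) atTop (nhds (W / xstar)) := by
  have hsmall : ∀ᶠ ε in 𝓝[>] 0, ε ∈ Ioo 0 xstar := Ioo_mem_nhdsGT hxstar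
  have hratio : Tendsto (fun ε => ε / (xstar - ε) * W) (𝓝[>] 0) (𝓝 0) := by
    have : ContinuousAt (fun ε => ε / (xstar - ε) * W) 0 :=
      (continuousAt_id.div (continuousAt_const.sub continuousAt_id) (by simpa using
        hxstar.ne')).mul continuousAt_const
    simpa using this.tendsto.mono_left nhdsWithin_le_nhds
  have hgap : Tendsto (fun n => xstar * (ξ n univ).toReal - ∫ y, y ∂ξ n) atTop (𝓝 0) :=
    tendsto_zero_of_abs_le_of_tendsto hratio
      (hsmall.mono fun ε hε => by
        simpa [measureReal_def] using ((hbelow ε hε.1 hε.2).const_mul xstar).add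
          (hmom.const_mul (ε / (xstar - ε))) |>.add (htail ε hε.1 hε.2))
      (hsmall.mono fun ε hε n =>
        abs_mul_measureReal_univ_sub_integral_le (hsupp n) (hint n) hε.1 hε.2)
  have hlim := (hgap.add hmom).div_const xstar
  simp only [sub_add_cancel, zero_add] at hlim
  simpa [hxstar.ne'] using hlim

/-- If for every ε ∈ (0,x*), ξ_n([0,x*−ε]) → 0 and ∫_{(x*+ε,∞)} y dξ_n → 0, and the
first moments ∫ y dξ_n → W, then the total masses ξ_n(ℝ₊) → W/x*. -/
theorem stmt_17 (ξ : ℕ → Measure ℝ) [∀ n, IsFiniteMeasure (ξ n)]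
    (hsupp : ∀ n, ξ n (Set.Iic 0) = 0) (hint : ∀ n, Integrable (fun y => y) (ξ n))
    (xstar : ℝ) (hxstar : 0 < xstar) (W : ℝ) (hW : 0 ≤ W)
    (hbelow : ∀ ε : ℝ, 0 < ε → ε < xstar →
      Tendsto (fun n => (ξ n (Set.Icc 0 (xstar - ε))).toReal) atTop (nhds 0))
    (htail : ∀ ε : ℝ, 0 < ε → ε < xstar →
      Tendsto (fun n => ∫ y in Set.Ioi (xstar + ε), y ∂(ξ n)) atTop (nhds 0))
    (hmom : Tendsto (fun n => ∫ y, y ∂(ξ n)) atTop (nhds W)) :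
    Tendsto (fun n => (ξ n Set.univ).toReal) atTop (nhds (W / xstar)) :=
  stmt_17_general ξ hsupp hint xstar hxstar W hbelow htail hmom
end
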